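/- arXiv:1903.12445 — 8 statements merged into one kernel-verified Lean document; each statement's English description precedes it below -/
import Mathlib

section
/- Let P be a subset of {2,3,4,...} and let r be a nonnegative real number such that the series ζ_P(r) = ∑_{m ∈ P} m^{-r} converges and ζ_P(r) = 1. Then for every integer n ≥ 1, the number of ordered factorizations H(n,P) satisfies H(n,P) ≤ n^r. -/
/-!
Removing the first factor identifies a factorization of `n > 1` with a pair `(m, l)` where
`m ∣ n`, `m ∈ P` and `l` is a factorization of `n / m`, so
`H(n) = ∑_{m ∣ n, m ∈ P} H(n / m)`. By strong induction each `H(n / m) ≤ (n / m)^r = n^r m^(-r)`,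
and the finitely many `m^(-r)` occurring sum to at most `ζ_P(r) = 1`.
-/

/-- `HfacP P n` is the number of ordered factorizations of `n` with all factors in `P`,
i.e. the number of finite sequences `(d_1, …, d_k)` with each `d_i ∈ P` and product `n`.
(For `P ⊆ {2,3,…}` and `n = 1` only the empty sequence qualifies, so `HfacP P 1 = 1`.) -/
noncomputable def HfacP (P : Set ℕ) (n : ℕ) : ℕ :=
  Nat.card {l : List ℕ // (∀ d ∈ l, d ∈ P) ∧ l.prod = n}

abbrev Factorizations (P : Set ℕ) (n : ℕ) : Type :=
  {l : List ℕ // (∀ d ∈ l, d ∈ P) ∧ l.prod = n}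

namespace Factorizations

variable {P : Set ℕ} {n : ℕ}

lemma subsingleton_one (h1 : 1 ∉ P) : Subsingleton (Factorizations P 1) := by
  refine ⟨fun ⟨l, hlP, hl⟩ ⟨l', hlP', hl'⟩ => ?_⟩
  suffices ∀ l : List ℕ, (∀ d ∈ l, d ∈ P) → l.prod = 1 → l = [] by
    simp only [this l hlP hl, this l' hlP' hl']
  rintro (_ | ⟨a, t⟩) hP hprod
  · rfl
  · have ha : a = 1 := Nat.dvd_one.mp (hprod ▸ List.dvd_prod List.mem_cons_self)
    exact absurd (ha ▸ hP a List.mem_cons_self) h1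

lemma card_one (h1 : 1 ∉ P) : Nat.card (Factorizations P 1) = 1 :=
  Nat.card_eq_one_iff_unique.mpr ⟨subsingleton_one h1, ⟨[], by simp⟩⟩

variable [DecidablePred (· ∈ P)]

lemma mem_of_mem_filter {m : ℕ} (hm : m ∈ n.divisors.filter (· ∈ P)) : m ∈ P :=
  (Finset.mem_filter.mp hm).2

lemma dvd_of_mem_filter {m : ℕ} (hm : m ∈ n.divisors.filter (· ∈ P)) : m ∣ n :=
  Nat.dvd_of_mem_divisors (Finset.mem_filter.mp hm).1

def cons (x : Σ m : n.divisors.filter (· ∈ P), Factorizations P (n / m)) : Factorizations P n :=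
  ⟨x.1.1 :: x.2.1,
    List.forall_mem_cons.mpr ⟨mem_of_mem_filter x.1.2, x.2.2.1⟩,
    by rw [List.prod_cons, x.2.2.2, Nat.mul_div_cancel' (dvd_of_mem_filter x.1.2)]⟩

lemma cons_injective : Function.Injective (cons (P := P) (n := n)) := by
  rintro ⟨⟨m, hm⟩, l⟩ ⟨⟨m', hm'⟩, l'⟩ h
  obtain ⟨rfl, hl⟩ := List.cons_eq_cons.mp (congrArg Subtype.val h)
  obtain rfl : l = l' := Subtype.ext hl
  rfl

lemma cons_surjective (hn : 1 < n) : Function.Surjective (cons (P := P) (n := n)) := by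
  rintro ⟨_ | ⟨a, t⟩, hP, hprod⟩
  · simp only [List.prod_nil] at hprod
    omega
  · obtain ⟨haP, htP⟩ := List.forall_mem_cons.mp hP
    have ha : a ∣ n := hprod ▸ List.dvd_prod List.mem_cons_self
    have ha0 : 0 < a := Nat.pos_of_dvd_of_pos ha (by omega)
    have hmem : a ∈ n.divisors.filter (· ∈ P) :=
      Finset.mem_filter.mpr ⟨Nat.mem_divisors.mpr ⟨ha, by omega⟩, haP⟩
    have htprod : t.prod = n / a := by
      rw [← hprod, List.prod_cons, Nat.mul_div_cancel_left _ ha0]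
    exact ⟨⟨⟨a, hmem⟩, ⟨t, htP, htprod⟩⟩, rfl⟩

lemma div_pos_and_div_lt_of_mem_filter (h1 : 1 ∉ P) (hn : n ≠ 0) {m : ℕ}
    (hm : m ∈ n.divisors.filter (· ∈ P)) : 0 < n / m ∧ n / m < n := by
  have hmn := dvd_of_mem_filter hm
  have hm0 : 0 < m := Nat.pos_of_dvd_of_pos hmn (Nat.pos_of_ne_zero hn)
  have hm1 : m ≠ 1 := fun h => h1 (h ▸ mem_of_mem_filter hm)
  exact ⟨Nat.div_pos (Nat.le_of_dvd (Nat.pos_of_ne_zero hn) hmn) hm0,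
    Nat.div_lt_self (Nat.pos_of_ne_zero hn) (by omega)⟩

theorem finite (h1 : 1 ∉ P) (hn : n ≠ 0) : Finite (Factorizations P n) := by
  induction n using Nat.strong_induction_on with
  | _ n ih =>
    rcases Nat.lt_or_ge n 2 with hn2 | hn2
    · obtain rfl : n = 1 := by omega
      have := subsingleton_one h1
      exact Finite.of_subsingleton
    · have (m : n.divisors.filter (· ∈ P)) : Finite (Factorizations P (n / m)) :=
        have ⟨hpos, hlt⟩ := div_pos_and_div_lt_of_mem_filter h1 hn m.2
        ih _ hlt hpos.ne'
      exact Finite.of_surjective _ (cons_surjective hn2)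

end Factorizations

open Factorizations in
theorem HfacP_eq_sum {P : Set ℕ} [DecidablePred (· ∈ P)] (h1 : 1 ∉ P) {n : ℕ} (hn : 1 < n) :
    HfacP P n = ∑ m ∈ n.divisors.filter (· ∈ P), HfacP P (n / m) := by
  have (m : n.divisors.filter (· ∈ P)) : Finite (Factorizations P (n / m)) :=
    finite h1 (div_pos_and_div_lt_of_mem_filter h1 (by omega) m.2).1.ne'
  rw [HfacP, ← Nat.card_eq_of_bijective _ ⟨cons_injective, cons_surjective hn⟩, Nat.card_sigma]
  exact Finset.sum_coe_sort _ fun m => HfacP P (n / m)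

lemma sum_le_tsum_of_forall_mem {P : Set ℕ} {f : ℕ → ℝ} (hf : ∀ m, 0 ≤ f m)
    (hsum : Summable fun m : P => f m) {F : Finset ℕ} (hF : ∀ m ∈ F, m ∈ P) :
    ∑ m ∈ F, f m ≤ ∑' m : P, f m := by
  classical
  rw [← Finset.sum_subtype_of_mem f hF]
  exact hsum.sum_le_tsum _ fun m _ => hf m

theorem HfacP_le_rpow {P : Set ℕ} (h1 : 1 ∉ P) {r : ℝ}
    (hsum : Summable fun m : P => ((m : ℕ) : ℝ) ^ (-r))
    (hle : ∑' m : P, ((m : ℕ) : ℝ) ^ (-r) ≤ 1) {n : ℕ} (hn : n ≠ 0) :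
    (HfacP P n : ℝ) ≤ (n : ℝ) ^ r := by
  classical
  induction n using Nat.strong_induction_on with
  | _ n ih =>
    rcases Nat.lt_or_ge n 2 with hn2 | hn2
    · obtain rfl : n = 1 := by omega
      simp [HfacP, Factorizations.card_one h1]
    set F := n.divisors.filter (· ∈ P)
    have hterm : ∀ m ∈ F, (HfacP P (n / m) : ℝ) ≤ (n : ℝ) ^ r * (m : ℝ) ^ (-r) := by
      intro m hm
      obtain ⟨hpos, hlt⟩ := Factorizations.div_pos_and_div_lt_of_mem_filter h1 hn hm
      have hmn := Factorizations.dvd_of_mem_filter hm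
      calc (HfacP P (n / m) : ℝ) ≤ ((n / m : ℕ) : ℝ) ^ r := ih _ hlt hpos.ne'
        _ = (n : ℝ) ^ r * (m : ℝ) ^ (-r) := by
          rw [Nat.cast_div_charZero hmn, Real.div_rpow (by positivity) (by positivity),
            Real.rpow_neg (by positivity), div_eq_mul_inv]
    have hF : ∑ m ∈ F, (m : ℝ) ^ (-r) ≤ 1 :=
      (sum_le_tsum_of_forall_mem (fun m => by positivity) hsum
        fun m hm => Factorizations.mem_of_mem_filter hm).trans hle
    calc (HfacP P n : ℝ) = ∑ m ∈ F, (HfacP P (n / m) : ℝ) := by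
          rw [HfacP_eq_sum h1 hn2, Nat.cast_sum]
      _ ≤ ∑ m ∈ F, (n : ℝ) ^ r * (m : ℝ) ^ (-r) := Finset.sum_le_sum hterm
      _ = (n : ℝ) ^ r * ∑ m ∈ F, (m : ℝ) ^ (-r) := (Finset.mul_sum ..).symm
      _ ≤ (n : ℝ) ^ r := mul_le_of_le_one_right (by positivity) hF

theorem stmt0_general (P : Set ℕ) (hP : ∀ m ∈ P, 2 ≤ m) (r : ℝ)
    (hsum : Summable fun m : P => ((m : ℕ) : ℝ) ^ (-r))
    (hroot : ∑' m : P, ((m : ℕ) : ℝ) ^ (-r) = 1) :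
    ∀ n : ℕ, 1 ≤ n → (HfacP P n : ℝ) ≤ (n : ℝ) ^ r :=
  fun _ hn => HfacP_le_rpow (fun h1 => by simpa using hP 1 h1) hsum hroot.le (by omega)

theorem stmt0 (P : Set ℕ) (hP : ∀ m ∈ P, 2 ≤ m) (r : ℝ) (hr : 0 ≤ r)
    (hsum : Summable fun m : P => ((m : ℕ) : ℝ) ^ (-r))
    (hroot : ∑' m : P, ((m : ℕ) : ℝ) ^ (-r) = 1) :
    ∀ n : ℕ, 1 ≤ n → (HfacP P n : ℝ) ≤ (n : ℝ) ^ r :=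
  stmt0_general P hP r hsum hroot
end

section
/- Let ρ > 1 be the real number satisfying ζ(ρ) = 2, where ζ is the Riemann zeta function (ρ = 1.72865…). Then for every integer n ≥ 2, the number of ordered factorizations H(n) satisfies H(n) ≤ n^ρ. -/
/-- `Hfac n` is the number of ordered factorizations of `n`, i.e. the number of finite
sequences `(d_1, …, d_k)` with each `d_i ≥ 2` and product `n`. -/
noncomputable def Hfac (n : ℕ) : ℕ :=
  Nat.card {l : List ℕ // (∀ d ∈ l, 2 ≤ d) ∧ l.prod = n}

/-!
Splitting off the first factor `d` of an ordered factorization of `n ≠ 1` gives the recursion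
`H(n) = ∑_{d ∣ n, d > 1} H(n / d)`. If `H(m) ≤ m^ρ` for all `m < n`, then
`H(n) ≤ n^ρ · ∑_{d ∣ n, d > 1} d^(-ρ) ≤ n^ρ (ζ(ρ) - 1) = n^ρ`,
so the bound follows by strong induction from `H(1) = 1`.
-/

open Finset

abbrev OrderedFactorization (n : ℕ) : Type :=
  {l : List ℕ // (∀ d ∈ l, 2 ≤ d) ∧ l.prod = n}

lemma Nat.two_le_of_mem_divisors_erase_one {n d : ℕ} (hd : d ∈ n.divisors.erase 1) :
    2 ≤ d := by
  have := Nat.pos_of_mem_divisors (Finset.mem_of_mem_erase hd)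
  have := Finset.ne_of_mem_erase hd
  omega

lemma Nat.div_lt_self_of_mem_divisors_erase_one {n d : ℕ} (hd : d ∈ n.divisors.erase 1) :
    n / d < n :=
  Nat.div_lt_self (Nat.pos_of_ne_zero (Nat.ne_zero_of_mem_divisors (Finset.mem_of_mem_erase hd)))
    (Nat.two_le_of_mem_divisors_erase_one hd)

namespace OrderedFactorization

lemma eq_nil_of_prod_eq_one {l : List ℕ} (h2 : ∀ d ∈ l, 2 ≤ d) (h1 : l.prod = 1) :
    l = [] := by
  cases l with
  | nil => rfl
  | cons a t =>
    have := Nat.eq_one_of_mul_eq_one_right (by simpa using h1)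
    have := h2 a List.mem_cons_self
    omega

instance : Unique (OrderedFactorization 1) where
  default := ⟨[], by simp⟩
  uniq := fun ⟨_, h2, h1⟩ => Subtype.ext (eq_nil_of_prod_eq_one h2 h1)

def cons {n d : ℕ} (hd : d ∈ n.divisors.erase 1) (l : OrderedFactorization (n / d)) :
    OrderedFactorization n :=
  ⟨d :: l.1, List.forall_mem_cons.2 ⟨Nat.two_le_of_mem_divisors_erase_one hd, l.2.1⟩, by
    rw [List.prod_cons, l.2.2,
      Nat.mul_div_cancel' (Nat.dvd_of_mem_divisors (mem_of_mem_erase hd))]⟩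

lemma cons_bijective {n : ℕ} (hn : n ≠ 1) :
    Function.Bijective
      (fun p : Σ d : n.divisors.erase 1, OrderedFactorization (n / d) => cons p.1.2 p.2) := by
  constructor
  · rintro ⟨⟨d, _⟩, ⟨l, _⟩⟩ ⟨⟨d', _⟩, ⟨l', _⟩⟩ h
    obtain ⟨rfl, rfl⟩ := List.cons_eq_cons.1 (congrArg Subtype.val h)
    rfl
  · rintro ⟨_ | ⟨a, t⟩, h2, hprod⟩
    · exact absurd hprod.symm hn
    · obtain ⟨ha, ht⟩ := List.forall_mem_cons.1 h2
      rw [List.prod_cons] at hprod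
      have ht0 : 0 < t.prod := List.prod_pos fun d hd => by have := ht d hd; omega
      have hd : a ∈ n.divisors.erase 1 := by
        simp only [mem_erase, Nat.mem_divisors]
        exact ⟨by omega, ⟨t.prod, hprod.symm⟩, by rw [← hprod]; positivity⟩
      have htn : t.prod = n / a := by
        rw [← hprod, Nat.mul_div_cancel_left _ (by omega)]
      exact ⟨⟨⟨a, hd⟩, ⟨t, ht, htn⟩⟩, rfl⟩

instance finite (n : ℕ) : Finite (OrderedFactorization n) := by
  induction n using Nat.strong_induction_on with
  | _ n ih =>
    rcases eq_or_ne n 1 with rfl | hn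
    · infer_instance
    · have (d : n.divisors.erase 1) : Finite (OrderedFactorization (n / d)) :=
        ih _ (Nat.div_lt_self_of_mem_divisors_erase_one d.2)
      exact Finite.of_surjective _ (cons_bijective hn).2

end OrderedFactorization

lemma Hfac_one : Hfac 1 = 1 :=
  Nat.card_unique

lemma Hfac_eq_sum_divisors_erase_one {n : ℕ} (hn : n ≠ 1) :
    Hfac n = ∑ d ∈ n.divisors.erase 1, Hfac (n / d) := by
  rw [Hfac, ← Nat.card_eq_of_bijective _ (OrderedFactorization.cons_bijective hn),
    Nat.card_sigma]
  exact sum_coe_sort (n.divisors.erase 1) fun d => Hfac (n / d)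

lemma sum_rpow_neg_le_tsum_sub_one {ρ : ℝ} (hρ : 1 < ρ) {s : Finset ℕ} (hs : 1 ∉ s) :
    ∑ d ∈ s, (d : ℝ) ^ (-ρ) ≤ ∑' m : ℕ, (m : ℝ) ^ (-ρ) - 1 := by
  have := (Real.summable_nat_rpow.2 (by linarith : -ρ < -1)).sum_le_tsum (insert 1 s)
    fun m _ => Real.rpow_nonneg m.cast_nonneg _
  rw [sum_insert hs, Nat.cast_one, Real.one_rpow] at this
  linarith

lemma Hfac_le_rpow {ρ : ℝ} (hρ : 1 < ρ) (hζ : ∑' m : ℕ, (m : ℝ) ^ (-ρ) ≤ 2)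
    (n : ℕ) : (Hfac n : ℝ) ≤ (n : ℝ) ^ ρ := by
  induction n using Nat.strong_induction_on with
  | _ n ih =>
    rcases eq_or_ne n 1 with rfl | hn
    · simp [Hfac_one]
    have hdivisors : ∑ d ∈ n.divisors.erase 1, (d : ℝ) ^ (-ρ) ≤ 1 := by
      linarith [sum_rpow_neg_le_tsum_sub_one hρ (notMem_erase 1 n.divisors)]
    rw [Hfac_eq_sum_divisors_erase_one hn]
    push_cast
    calc ∑ d ∈ n.divisors.erase 1, (Hfac (n / d) : ℝ)
        ≤ ∑ d ∈ n.divisors.erase 1, ((n / d : ℕ) : ℝ) ^ ρ :=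
          sum_le_sum fun d hd => ih _ (Nat.div_lt_self_of_mem_divisors_erase_one hd)
      _ = (n : ℝ) ^ ρ * ∑ d ∈ n.divisors.erase 1, (d : ℝ) ^ (-ρ) := by
          rw [mul_sum]
          refine sum_congr rfl fun d hd => ?_
          have hdn := Nat.dvd_of_mem_divisors (mem_of_mem_erase hd)
          have hd0 : (0 : ℝ) < d := by
            exact_mod_cast Nat.pos_of_mem_divisors (mem_of_mem_erase hd)
          rw [Nat.cast_div hdn hd0.ne', Real.div_rpow n.cast_nonneg hd0.le,
            Real.rpow_neg hd0.le, div_eq_mul_inv]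
      _ ≤ (n : ℝ) ^ ρ :=
          mul_le_of_le_one_right (Real.rpow_nonneg n.cast_nonneg _) hdivisors

theorem stmt2 (ρ : ℝ) (hρ : 1 < ρ) (hzeta : ∑' m : ℕ, (m : ℝ) ^ (-ρ) = 2) :
    ∀ n : ℕ, 2 ≤ n → (Hfac n : ℝ) ≤ (n : ℝ) ^ ρ :=
  fun n _ => Hfac_le_rpow hρ hzeta.le n
end

section
/- Let s > 1 be a real number. Then for every odd integer n ≥ 3 and every integer k ≥ 1, the number H_k(n) of ordered factorizations of n into exactly k factors satisfies H_k(n) ≤ ((1 − 2^{-s})ζ(s) − 1)^{k-1} · n^s / 3^s. -/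
/-!
For odd `n` every factor of an ordered factorization is odd, hence at least `3`. Splitting off
the first factor gives `H_{k+1}(n) = ∑_{d ∣ n, d ≥ 2} H_k(n / d)`, and induction on `k` bounds
`H_{k+1}(n)` by `C ^ k (n / 3) ^ s` with `C = ∑_{d odd, d ≥ 3} d ^ (-s)`: each step multiplies by
at most `∑_{d ∣ n, d ≥ 3 odd} d ^ (-s) ≤ C`. Removing the even terms and the term `1` from `ζ(s)`
shows `C = (1 - 2 ^ (-s)) ζ(s) - 1`.
-/

/-- `Hkfac k n` is the number of ordered factorizations of `n` into exactly `k` factors,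
each factor being at least `2`. -/
noncomputable def Hkfac (k n : ℕ) : ℕ :=
  Nat.card {l : List ℕ // l.length = k ∧ (∀ d ∈ l, 2 ≤ d) ∧ l.prod = n}

open Finset

def orderedFactorizations : ℕ → ℕ → Finset (List ℕ)
  | 0, n => if n = 1 then {[]} else ∅
  | k + 1, n => {d ∈ n.divisors | 2 ≤ d}.biUnion fun d =>
      (orderedFactorizations k (n / d)).image (d :: ·)

theorem mem_orderedFactorizations {k n : ℕ} {l : List ℕ} (hn : n ≠ 0) :
    l ∈ orderedFactorizations k n ↔ l.length = k ∧ (∀ d ∈ l, 2 ≤ d) ∧ l.prod = n := by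
  induction k generalizing n l with
  | zero =>
    rw [orderedFactorizations, List.length_eq_zero_iff]
    split_ifs with h <;> aesop
  | succ k ih =>
    cases l with
    | nil => simp [orderedFactorizations]
    | cons a t =>
      simp only [orderedFactorizations, mem_biUnion, mem_image, mem_filter, Nat.mem_divisors,
        List.cons.injEq, List.length_cons, List.forall_mem_cons, List.prod_cons,
        Nat.add_right_cancel_iff]
      constructor
      · rintro ⟨a, ⟨⟨ha, -⟩, ha2⟩, t, ht, rfl, rfl⟩
        obtain ⟨hl, h2, hp⟩ := (ih (Nat.div_ne_zero_iff_of_dvd ha |>.2 ⟨hn, by omega⟩)).1 ht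
        exact ⟨hl, ⟨ha2, h2⟩, by rw [hp, Nat.mul_div_cancel' ha]⟩
      · rintro ⟨hl, ⟨ha2, h2⟩, hp⟩
        have ha : a ∣ n := ⟨t.prod, hp.symm⟩
        have htp : t.prod = n / a := by rw [← hp, Nat.mul_div_cancel_left _ (by omega)]
        refine ⟨a, ⟨⟨ha, hn⟩, ha2⟩, t, (ih ?_).2 ⟨hl, h2, htp⟩, rfl, rfl⟩
        exact Nat.div_ne_zero_iff_of_dvd ha |>.2 ⟨hn, by omega⟩

theorem Hkfac_eq_card_orderedFactorizations {k n : ℕ} (hn : n ≠ 0) :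
    Hkfac k n = #(orderedFactorizations k n) := by
  rw [Hkfac, ← Nat.card_eq_finsetCard]
  exact Nat.card_congr (Equiv.subtypeEquivRight fun _ => (mem_orderedFactorizations hn).symm)

theorem card_orderedFactorizations_succ (k n : ℕ) :
    #(orderedFactorizations (k + 1) n) =
      ∑ d ∈ n.divisors with 2 ≤ d, #(orderedFactorizations k (n / d)) := by
  rw [orderedFactorizations, card_biUnion]
  · exact sum_congr rfl fun d _ => card_image_of_injective _ List.cons_injective
  · intro a _ b _ hab
    simp only [disjoint_left, mem_image]
    rintro _ ⟨t, -, rfl⟩ ⟨t', -, h⟩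
    exact hab (List.cons.inj h).1.symm

theorem Hkfac_succ {n : ℕ} (hn : n ≠ 0) (k : ℕ) :
    Hkfac (k + 1) n = ∑ d ∈ n.divisors with 2 ≤ d, Hkfac k (n / d) := by
  rw [Hkfac_eq_card_orderedFactorizations hn, card_orderedFactorizations_succ]
  refine sum_congr rfl fun d hd => (Hkfac_eq_card_orderedFactorizations ?_).symm
  obtain ⟨⟨hdn, -⟩, hd2⟩ := by simpa only [mem_filter, Nat.mem_divisors] using hd
  exact Nat.div_ne_zero_iff_of_dvd hdn |>.2 ⟨hn, by omega⟩

theorem orderedFactorizations_one {n : ℕ} (hn : n ≠ 0) :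
    orderedFactorizations 1 n = if 2 ≤ n then {[n]} else ∅ := by
  ext l
  rw [mem_orderedFactorizations hn, List.length_eq_one_iff]
  split_ifs with h2
  · simp only [mem_singleton]
    constructor
    · rintro ⟨⟨a, rfl⟩, -, hp⟩
      simp_all
    · rintro rfl
      simpa using h2
  · simp only [notMem_empty, iff_false]
    rintro ⟨⟨a, rfl⟩, ha, rfl⟩
    simp_all

theorem Hkfac_one {n : ℕ} (hn : n ≠ 0) : Hkfac 1 n = if 2 ≤ n then 1 else 0 := by
  rw [Hkfac_eq_card_orderedFactorizations hn, orderedFactorizations_one hn]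
  split_ifs <;> rfl

section OddReciprocalPowers

variable {s : ℝ}

theorem tsum_odd_rpow_neg (hs : 1 < s) :
    ∑' j : ℕ, ((2 * j + 1 : ℕ) : ℝ) ^ (-s) = (1 - 2 ^ (-s)) * ∑' m : ℕ, (m : ℝ) ^ (-s) := by
  have hsum : Summable fun m : ℕ => (m : ℝ) ^ (-s) := Real.summable_nat_rpow.2 (by linarith)
  have heven : ∑' j : ℕ, ((2 * j : ℕ) : ℝ) ^ (-s) = 2 ^ (-s) * ∑' m : ℕ, (m : ℝ) ^ (-s) := by
    rw [← tsum_mul_left]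
    congr 1 with j
    rw [Nat.cast_mul, Nat.cast_ofNat, Real.mul_rpow zero_le_two (Nat.cast_nonneg _)]
  have hsplit : ∑' j : ℕ, ((2 * j : ℕ) : ℝ) ^ (-s) + ∑' j : ℕ, ((2 * j + 1 : ℕ) : ℝ) ^ (-s) =
      ∑' m : ℕ, (m : ℝ) ^ (-s) :=
    tsum_even_add_odd (f := fun m : ℕ => (m : ℝ) ^ (-s))
      (hsum.comp_injective (mul_right_injective₀ (two_ne_zero' ℕ)))
      (hsum.comp_injective fun a b h => by simpa using h)
  rw [heven] at hsplit
  linarith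

theorem tsum_odd_rpow_neg_eq_one_add (hs : 1 < s) :
    ∑' j : ℕ, ((2 * j + 1 : ℕ) : ℝ) ^ (-s) = 1 + ∑' j : ℕ, ((2 * j + 3 : ℕ) : ℝ) ^ (-s) := by
  have hsum : Summable fun m : ℕ => (m : ℝ) ^ (-s) := Real.summable_nat_rpow.2 (by linarith)
  have hodd : Summable fun j : ℕ => ((2 * j + 1 : ℕ) : ℝ) ^ (-s) :=
    hsum.comp_injective fun a b h => by simpa using h
  rw [hodd.tsum_eq_zero_add]
  congr 1
  simp

theorem sum_rpow_neg_le_tsum_odd (hs : 1 < s) {D : Finset ℕ} (hD : ∀ d ∈ D, Odd d ∧ 3 ≤ d) :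
    ∑ d ∈ D, (d : ℝ) ^ (-s) ≤ ∑' j : ℕ, ((2 * j + 3 : ℕ) : ℝ) ^ (-s) := by
  have hsum : Summable fun m : ℕ => (m : ℝ) ^ (-s) := Real.summable_nat_rpow.2 (by linarith)
  have hinj : Function.Injective fun j : ℕ => 2 * j + 3 := fun a b h => by simpa using h
  rw [← sum_preimage _ D hinj.injOn fun d : ℕ => (d : ℝ) ^ (-s)]
  · exact (hsum.comp_injective hinj).sum_le_tsum _ fun _ _ => by positivity
  · rintro d hd hdr
    obtain ⟨⟨c, rfl⟩, hc⟩ := hD d hd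
    exact (hdr ⟨c - 1, show 2 * (c - 1) + 3 = 2 * c + 1 by omega⟩).elim

end OddReciprocalPowers

theorem Hkfac_succ_le_of_odd {s : ℝ} (hs : 1 < s) (k : ℕ) {n : ℕ} (hn : Odd n) :
    (Hkfac (k + 1) n : ℝ) ≤
      (∑' j : ℕ, ((2 * j + 3 : ℕ) : ℝ) ^ (-s)) ^ k * ((n : ℝ) / 3) ^ s := by
  induction k generalizing n with
  | zero =>
    rw [Hkfac_one hn.pos.ne', pow_zero, one_mul]
    split_ifs with h2
    · have h3 : 3 ≤ n := by obtain ⟨c, rfl⟩ := hn; omega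
      exact_mod_cast Real.one_le_rpow (by rw [one_le_div three_pos]; exact_mod_cast h3)
        (by linarith)
    · simp only [Nat.cast_zero]; positivity
  | succ k ih =>
    set C := ∑' j : ℕ, ((2 * j + 3 : ℕ) : ℝ) ^ (-s)
    have hD : ∀ d ∈ {d ∈ n.divisors | 2 ≤ d}, d ∣ n ∧ Odd d ∧ 3 ≤ d := by
      intro d hd
      obtain ⟨⟨hdn, -⟩, hd2⟩ := by simpa only [mem_filter, Nat.mem_divisors] using hd
      have hodd : Odd d := hn.of_dvd_nat hdn
      exact ⟨hdn, hodd, by obtain ⟨c, rfl⟩ := hodd; omega⟩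
    calc (Hkfac (k + 1 + 1) n : ℝ)
        = ∑ d ∈ n.divisors with 2 ≤ d, (Hkfac (k + 1) (n / d) : ℝ) := by
          rw [Hkfac_succ hn.pos.ne', Nat.cast_sum]
      _ ≤ ∑ d ∈ n.divisors with 2 ≤ d, C ^ k * ((n : ℝ) / 3) ^ s * (d : ℝ) ^ (-s) := by
          refine sum_le_sum fun d hd => ?_
          obtain ⟨hdn, -, hd3⟩ := hD d hd
          have hd0 : (d : ℝ) ≠ 0 := by positivity
          refine (ih (hn.of_dvd_nat (Nat.div_dvd_of_dvd hdn))).trans_eq ?_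
          rw [Nat.cast_div hdn hd0, div_right_comm, Real.div_rpow (by positivity) (by positivity),
            Real.rpow_neg (by positivity), div_eq_mul_inv, mul_assoc]
      _ = C ^ k * ((n : ℝ) / 3) ^ s * ∑ d ∈ n.divisors with 2 ≤ d, (d : ℝ) ^ (-s) :=
          (mul_sum ..).symm
      _ ≤ C ^ k * ((n : ℝ) / 3) ^ s * C :=
          mul_le_mul_of_nonneg_left (sum_rpow_neg_le_tsum_odd hs fun d hd => (hD d hd).2)
            (by positivity)
      _ = C ^ (k + 1) * ((n : ℝ) / 3) ^ s := by ring

theorem stmt5 (s : ℝ) (hs : 1 < s) :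
    ∀ n : ℕ, 3 ≤ n → Odd n → ∀ k : ℕ, 1 ≤ k →
      (Hkfac k n : ℝ) ≤
        ((1 - (2 : ℝ) ^ (-s)) * (∑' m : ℕ, (m : ℝ) ^ (-s)) - 1) ^ (k - 1) *
          (n : ℝ) ^ s / (3 : ℝ) ^ s := by
  intro n _ hn k hk
  obtain ⟨k, rfl⟩ := Nat.exists_eq_add_of_le' hk
  rw [← tsum_odd_rpow_neg hs, tsum_odd_rpow_neg_eq_one_add hs, add_sub_cancel_left,
    Nat.add_sub_cancel, mul_div_assoc, ← Real.div_rpow (by positivity) (by positivity)]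
  exact Hkfac_succ_le_of_odd hs k hn
end

section
/- Let f : ℕ → ℝ be a multiplicative arithmetic function with f(1) = 1, i.e., f(m)f(n) = f(mn) for all coprime m, n ∈ ℕ. Assume there exist C > 0 and γ ∈ ℝ such that |f(n)| ≤ C n^γ for all n ≥ 2. Then for all n ≥ 2, the Dirichlet inverse satisfies |f⁻¹(n)| ≤ (C/(C+1))^{ω(n)} · (C+1)^{Ω(n)} · n^γ. -/
/-!
The inverse `g` is multiplicative: the multiplicative function agreeing with `g` on prime powers
also inverts `f`, so it is `g`. On a prime power, `f * g = ε` gives the recurrence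
`g(p^(k+1)) = -∑_{j ≤ k} f(p^(k+1-j)) g(p^j)`, and induction yields
`|g(p^k)| ≤ C (C+1)^(k-1) p^(kγ)` for `k ≥ 1`. Multiplying over the prime powers dividing `n`
gives one factor `C / (C+1)` per prime and one factor `C + 1` per prime counted with multiplicity.
-/

open Finset ArithmeticFunction

def IsDirichletInverse {R : Type*} [Semiring R] (f g : ℕ → R) : Prop :=
  ∀ n : ℕ, 0 < n → ∑ d ∈ n.divisors, f (n / d) * g d = if n = 1 then 1 else 0

namespace ArithmeticFunction

variable {R : Type*}

def ofFun [Zero R] (f : ℕ → R) : ArithmeticFunction R :=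
  ⟨fun n => if n = 0 then 0 else f n, if_pos rfl⟩

@[simp]
theorem ofFun_apply [Zero R] {f : ℕ → R} {n : ℕ} (hn : n ≠ 0) : ofFun f n = f n :=
  if_neg hn

theorem isMultiplicative_ofFun [MonoidWithZero R] {f : ℕ → R} (h1 : f 1 = 1)
    (hmul : ∀ m n : ℕ, 0 < m → 0 < n → m.Coprime n → f (m * n) = f m * f n) :
    (ofFun f).IsMultiplicative := by
  refine IsMultiplicative.iff_ne_zero.mpr ⟨by simpa using h1, fun hm hn hmn => ?_⟩
  simp [hm, hn, hmul _ _ (Nat.pos_of_ne_zero hm) (Nat.pos_of_ne_zero hn) hmn]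

theorem ofFun_mul_ofFun_apply [Semiring R] (f g : ℕ → R) (n : ℕ) :
    (ofFun f * ofFun g) n = ∑ d ∈ n.divisors, f (n / d) * g d := by
  rw [mul_apply, ← Nat.sum_divisorsAntidiagonal' (f := fun a b => f a * g b)]
  refine sum_congr rfl fun x hx => ?_
  obtain ⟨hx₁, hx₂⟩ := Nat.ne_zero_of_mem_divisorsAntidiagonal hx
  rw [ofFun_apply hx₁, ofFun_apply hx₂]

theorem ofFun_mul_ofFun_eq_one [Semiring R] {f g : ℕ → R}
    (h : IsDirichletInverse f g) : ofFun f * ofFun g = 1 := by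
  ext n
  rcases eq_or_ne n 0 with rfl | hn
  · simp
  · rw [ofFun_mul_ofFun_apply, h n (Nat.pos_of_ne_zero hn), one_apply]

section PrimePowExtend

variable [CommMonoidWithZero R]

def primePowExtend (g : ArithmeticFunction R) : ArithmeticFunction R :=
  ofFun fun n => n.factorization.prod fun p k => g (p ^ k)

theorem isMultiplicative_primePowExtend (g : ArithmeticFunction R) :
    (primePowExtend g).IsMultiplicative :=
  isMultiplicative_ofFun (by simp) fun m n hm hn hmn => by
    rw [Nat.factorization_mul hm.ne' hn.ne']
    exact Finsupp.prod_add_index_of_disjoint (by simpa using hmn.disjoint_primeFactors) _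

theorem primePowExtend_apply_prime_pow {g : ArithmeticFunction R} (hg : g 1 = 1) {p : ℕ}
    (hp : p.Prime) (k : ℕ) : primePowExtend g (p ^ k) = g (p ^ k) := by
  rw [primePowExtend, ofFun_apply (pow_ne_zero k hp.ne_zero), hp.factorization_pow,
    Finsupp.prod_single_index (by simpa using hg)]

end PrimePowExtend

theorem IsMultiplicative.of_mul_eq_one [CommSemiring R] {f g : ArithmeticFunction R}
    (hf : f.IsMultiplicative) (hfg : f * g = 1) : g.IsMultiplicative := by
  have hg1 : g 1 = 1 := by simpa [hf.map_one] using congr_arg (· 1) hfg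
  -- `primePowExtend g` is multiplicative and inverts `f` on prime powers, hence everywhere
  have hfh : f * primePowExtend g = 1 := by
    rw [(hf.mul (isMultiplicative_primePowExtend g)).eq_iff_eq_on_prime_powers _ 1
      isMultiplicative_one]
    intro p i hp
    rw [← hfg, mul_apply, mul_apply]
    refine sum_congr rfl fun x hx => ?_
    obtain ⟨j, -, hj⟩ :=
      (Nat.mem_divisors_prime_pow hp i).mp (Nat.snd_mem_divisors_of_mem_antidiagonal hx)
    rw [hj, primePowExtend_apply_prime_pow hg1 hp]
  have hext : primePowExtend g = g := calc
    primePowExtend g = primePowExtend g * (f * g) := by rw [hfg, mul_one]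
    _ = (f * primePowExtend g) * g := by ring
    _ = g := by rw [hfh, one_mul]
  exact hext ▸ isMultiplicative_primePowExtend g

end ArithmeticFunction

namespace IsDirichletInverse

variable {f g : ℕ → ℝ} {p : ℕ}

theorem apply_prime_pow_succ (hginv : IsDirichletInverse f g) (hf1 : f 1 = 1)
    (hp : p.Prime) (k : ℕ) :
    g (p ^ (k + 1)) =
      -(∑ i ∈ range k, f (p ^ (k - i)) * g (p ^ (i + 1)) + f (p ^ (k + 1))) := by
  have hg1 : g 1 = 1 := by simpa [hf1] using hginv 1 one_pos
  have h := hginv (p ^ (k + 1)) (pow_pos hp.pos _)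
  rw [Nat.sum_divisors_prime_pow hp, sum_range_succ, sum_range_succ',
    if_neg (Nat.one_lt_pow (Nat.succ_ne_zero k) hp.one_lt).ne'] at h
  have hquot : ∀ i ∈ range k, p ^ (k + 1) / p ^ (i + 1) = p ^ (k - i) := fun i hi => by
    rw [Nat.pow_div (by simpa using (mem_range.mp hi).le) hp.pos, Nat.add_sub_add_right]
  rw [sum_congr rfl fun i hi => by rw [hquot i hi], pow_zero, Nat.div_one, hg1,
    Nat.div_self (pow_pos hp.pos _), hf1] at h
  linarith

-- The constants close up because `1 + C ∑_{i<k} (C + 1) ^ i = (C + 1) ^ k`.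
theorem abs_apply_prime_pow_succ_le (hginv : IsDirichletInverse f g) (hf1 : f 1 = 1)
    (hp : p.Prime) {C q : ℝ} (hfp : ∀ m : ℕ, |f (p ^ (m + 1))| ≤ C * q ^ (m + 1))
    (k : ℕ) :
    |g (p ^ (k + 1))| ≤ C * (C + 1) ^ k * q ^ (k + 1) := by
  induction k using Nat.strong_induction_on with
  | _ k ih =>
  have hterm : ∀ i ∈ range k,
      |f (p ^ (k - i)) * g (p ^ (i + 1))| ≤ C * (C + 1) ^ i * (C * q ^ (k + 1)) := by
    intro i hi
    obtain ⟨m, rfl⟩ := Nat.exists_eq_add_of_lt (mem_range.mp hi)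
    rw [abs_mul, show i + m + 1 - i = m + 1 by omega]
    calc |f (p ^ (m + 1))| * |g (p ^ (i + 1))|
        ≤ C * q ^ (m + 1) * (C * (C + 1) ^ i * q ^ (i + 1)) :=
          mul_le_mul (hfp m) (ih i (mem_range.mp hi)) (abs_nonneg _)
            ((abs_nonneg _).trans (hfp m))
      _ = C * (C + 1) ^ i * (C * q ^ (i + m + 1 + 1)) := by ring
  rw [hginv.apply_prime_pow_succ hf1 hp, abs_neg]
  calc _ ≤ ∑ i ∈ range k, |f (p ^ (k - i)) * g (p ^ (i + 1))| + |f (p ^ (k + 1))| :=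
        (abs_add_le _ _).trans (add_le_add_left (abs_sum_le_sum_abs _ _) _)
    _ ≤ ∑ i ∈ range k, C * (C + 1) ^ i * (C * q ^ (k + 1)) + C * q ^ (k + 1) :=
        add_le_add (sum_le_sum hterm) (hfp k)
    _ = C * (C + 1) ^ k * q ^ (k + 1) := by
        rw [← sum_mul, ← mul_sum, ← geom_sum_mul_add C k]
        ring

theorem abs_apply_prime_pow_le (hginv : IsDirichletInverse f g) (hf1 : f 1 = 1)
    {C γ : ℝ} (hC : 0 ≤ C) (hf : ∀ n : ℕ, 2 ≤ n → |f n| ≤ C * (n : ℝ) ^ γ)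
    (hp : p.Prime) {k : ℕ} (hk : k ≠ 0) :
    |g (p ^ k)| ≤ C / (C + 1) * (C + 1) ^ k * ((p : ℝ) ^ γ) ^ k := by
  have hfp (m : ℕ) : |f (p ^ (m + 1))| ≤ C * ((p : ℝ) ^ γ) ^ (m + 1) := by
    rw [Real.rpow_pow_comm (Nat.cast_nonneg p), ← Nat.cast_pow]
    exact hf _ (hp.two_le.trans (Nat.le_self_pow (Nat.succ_ne_zero m) p))
  obtain ⟨m, rfl⟩ := Nat.exists_eq_add_one_of_ne_zero hk
  calc _ ≤ C * (C + 1) ^ m * ((p : ℝ) ^ γ) ^ (m + 1) :=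
        hginv.abs_apply_prime_pow_succ_le hf1 hp hfp m
    _ = _ := by
        field_simp
        ring

end IsDirichletInverse

theorem pow_cardFactors_eq_prod_primeFactors {M : Type*} [CommMonoid M] (x : M) (n : ℕ) :
    x ^ cardFactors n = ∏ p ∈ n.primeFactors, x ^ n.factorization p := by
  rw [cardFactors_eq_sum_factorization, Finsupp.sum, Nat.support_factorization,
    prod_pow_eq_pow_sum]

theorem Real.natCast_rpow_eq_prod_primeFactors {n : ℕ} (hn : n ≠ 0) (γ : ℝ) :
    (n : ℝ) ^ γ = ∏ p ∈ n.primeFactors, ((p : ℝ) ^ γ) ^ n.factorization p := by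
  conv_lhs => rw [← Nat.prod_factorization_pow_eq_self hn]
  rw [Finsupp.prod, Nat.cast_prod, ← Real.finsetProd_rpow _ _ (fun _ _ => by positivity)]
  refine prod_congr rfl fun p _ => ?_
  rw [Nat.cast_pow, Real.rpow_pow_comm (Nat.cast_nonneg p)]

theorem stmt7 (f g : ℕ → ℝ) (hf1 : f 1 = 1)
    (hmult : ∀ m n : ℕ, 0 < m → 0 < n → Nat.Coprime m n → f (m * n) = f m * f n)
    (hginv : ∀ n : ℕ, 0 < n →
      ∑ d ∈ n.divisors, f (n / d) * g d = if n = 1 then 1 else 0)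
    (C : ℝ) (hC : 0 < C) (γ : ℝ)
    (hf : ∀ n : ℕ, 2 ≤ n → |f n| ≤ C * (n : ℝ) ^ γ) :
    ∀ n : ℕ, 2 ≤ n →
      |g n| ≤ (C / (C + 1)) ^ n.primeFactors.card *
        (C + 1) ^ n.primeFactorsList.length * (n : ℝ) ^ γ := by
  intro n hn
  have hn0 : n ≠ 0 := by omega
  have hg : (ofFun g).IsMultiplicative :=
    (isMultiplicative_ofFun hf1 hmult).of_mul_eq_one (ofFun_mul_ofFun_eq_one hginv)
  rw [← ofFun_apply (f := g) hn0, IsMultiplicative.multiplicative_factorization _ hg hn0,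
    Finsupp.prod, Nat.support_factorization, abs_prod, ← cardFactors_apply,
    pow_cardFactors_eq_prod_primeFactors, Real.natCast_rpow_eq_prod_primeFactors hn0,
    ← prod_const, ← prod_mul_distrib, ← prod_mul_distrib]
  refine prod_le_prod (fun _ _ => abs_nonneg _) fun p hp => ?_
  have hp' : p.Prime := Nat.prime_of_mem_primeFactors hp
  rw [ofFun_apply (pow_ne_zero _ hp'.ne_zero)]
  exact IsDirichletInverse.abs_apply_prime_pow_le hginv hf1 hC.le hf hp'
    (Finsupp.mem_support_iff.mp hp)
end

section
/- Let f : ℕ → ℝ be an arithmetic function with f(1) = 1. Assume there exist C > 0 and γ ∈ ℝ such that |f(n)| ≤ C n^γ for all n ≥ 2, and let ς > 1 be the real number satisfying ζ(ς) = 1/C + 1, where ζ is the Riemann zeta function. Then for all n ≥ 2, the Dirichlet inverse satisfies |f⁻¹(n)| ≤ n^{γ+ς}. -/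
/-!
At `n ≥ 2` the convolution identity reads `g n = -∑_{d ∣ n, d < n} f (n / d) * g d`. By strong
induction each term is at most `C (n/d)^γ d^(γ+ς) = C n^γ d^ς`, and
`∑_{d ∣ n, d < n} d^ς = n^ς ∑_{e ∣ n, e > 1} e^(-ς) ≤ n^ς (ζ(ς) - 1) = n^ς / C`.
-/

open Finset

lemma Nat.two_le_div_of_mem_properDivisors {n d : ℕ} (hd : d ∈ n.properDivisors) :
    2 ≤ n / d := by
  obtain ⟨⟨k, rfl⟩, hlt⟩ := Nat.mem_properDivisors.mp hd
  have hd0 : 0 < d := Nat.pos_of_ne_zero (by rintro rfl; simp at hlt)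
  rw [Nat.mul_div_cancel_left k hd0]
  by_contra! hk
  interval_cases k <;> simp at hlt

lemma eq_neg_sum_properDivisors_of_sum_divisors_eq_zero {R : Type*} [Ring R] {f g : ℕ → R}
    (hf1 : f 1 = 1) {n : ℕ} (hn : n ≠ 0) (h : ∑ d ∈ n.divisors, f (n / d) * g d = 0) :
    g n = -∑ d ∈ n.properDivisors, f (n / d) * g d := by
  rw [← Nat.cons_self_properDivisors hn, sum_cons, Nat.div_self (Nat.pos_of_ne_zero hn), hf1,
    one_mul] at h
  exact eq_neg_of_add_eq_zero_left h

lemma rpow_eq_rpow_mul_cast_div_rpow_neg {n d : ℕ} (hd : d ∈ n.divisors) (s : ℝ) :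
    (d : ℝ) ^ s = (n : ℝ) ^ s * ((n / d : ℕ) : ℝ) ^ (-s) := by
  obtain ⟨hdvd, hn⟩ := Nat.mem_divisors.mp hd
  have hd0 : (0 : ℝ) < d := Nat.cast_pos.mpr (Nat.pos_of_dvd_of_pos hdvd (Nat.pos_of_ne_zero hn))
  have hn0 : (0 : ℝ) < n := Nat.cast_pos.mpr (Nat.pos_of_ne_zero hn)
  rw [Nat.cast_div hdvd hd0.ne', Real.div_rpow hn0.le hd0.le, Real.rpow_neg hn0.le,
    Real.rpow_neg hd0.le]
  have : (n : ℝ) ^ s ≠ 0 := (Real.rpow_pos_of_pos hn0 s).ne'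
  field_simp

lemma sum_properDivisors_rpow_le {s : ℝ} (hs : Summable fun m : ℕ => (m : ℝ) ^ (-s)) {n : ℕ}
    (hn : n ≠ 0) :
    ∑ d ∈ n.properDivisors, (d : ℝ) ^ s ≤ (n : ℝ) ^ s * (∑' m : ℕ, (m : ℝ) ^ (-s) - 1) := by
  have hdiv : ∑ d ∈ n.divisors, ((n / d : ℕ) : ℝ) ^ (-s) ≤ ∑' m : ℕ, (m : ℝ) ^ (-s) := by
    rw [Nat.sum_div_divisors n fun d => (d : ℝ) ^ (-s)]
    exact hs.sum_le_tsum _ fun m _ => by positivity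
  have hsum : ∑ d ∈ n.divisors, (d : ℝ) ^ s ≤ (n : ℝ) ^ s * ∑' m : ℕ, (m : ℝ) ^ (-s) := by
    rw [sum_congr rfl fun d hd => rpow_eq_rpow_mul_cast_div_rpow_neg hd s, ← mul_sum]
    gcongr
  rw [← Nat.cons_self_properDivisors hn, sum_cons] at hsum
  rw [mul_sub, mul_one]
  linarith

theorem abs_le_rpow_of_sum_divisors_eq_ite {f g : ℕ → ℝ} (hf1 : f 1 = 1)
    (hginv : ∀ n : ℕ, 0 < n →
      ∑ d ∈ n.divisors, f (n / d) * g d = if n = 1 then 1 else 0)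
    {C γ s : ℝ} (hC : 0 ≤ C) (hf : ∀ n : ℕ, 2 ≤ n → |f n| ≤ C * (n : ℝ) ^ γ)
    (hs : Summable fun m : ℕ => (m : ℝ) ^ (-s))
    (hCs : C * (∑' m : ℕ, (m : ℝ) ^ (-s) - 1) ≤ 1) :
    ∀ n : ℕ, 0 < n → |g n| ≤ (n : ℝ) ^ (γ + s) := by
  intro n
  induction n using Nat.strong_induction_on with
  | _ n ih =>
    intro hn
    obtain rfl | hn2 := (Nat.succ_le_of_lt hn).eq_or_lt
    · have hg1 : g 1 = 1 := by simpa [hf1] using hginv 1 one_pos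
      simp [hg1]
    have hn0 : (0 : ℝ) < n := Nat.cast_pos.mpr hn
    have hterm : ∀ d ∈ n.properDivisors,
        |f (n / d) * g d| ≤ C * (n : ℝ) ^ γ * (d : ℝ) ^ s := by
      intro d hd
      obtain ⟨hdvd, hdn⟩ := Nat.mem_properDivisors.mp hd
      have hd0 : 0 < d := Nat.pos_of_dvd_of_pos hdvd hn
      have hd0' : (0 : ℝ) < d := Nat.cast_pos.mpr hd0
      calc |f (n / d) * g d| = |f (n / d)| * |g d| := abs_mul _ _
        _ ≤ C * ((n / d : ℕ) : ℝ) ^ γ * (d : ℝ) ^ (γ + s) :=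
          mul_le_mul (hf _ (Nat.two_le_div_of_mem_properDivisors hd)) (ih d hdn hd0)
            (abs_nonneg _) (by positivity)
        _ = C * (n : ℝ) ^ γ * (d : ℝ) ^ s := by
          rw [Nat.cast_div hdvd hd0'.ne', Real.div_rpow hn0.le hd0'.le, Real.rpow_add hd0']
          have : (d : ℝ) ^ γ ≠ 0 := (Real.rpow_pos_of_pos hd0' γ).ne'
          field_simp
    have hrec := eq_neg_sum_properDivisors_of_sum_divisors_eq_zero hf1 hn.ne'
      ((hginv n hn).trans (if_neg hn2.ne'))
    calc |g n| ≤ ∑ d ∈ n.properDivisors, |f (n / d) * g d| := by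
          rw [hrec, abs_neg]
          exact abs_sum_le_sum_abs _ _
      _ ≤ C * (n : ℝ) ^ γ * ∑ d ∈ n.properDivisors, (d : ℝ) ^ s := by
          rw [mul_sum]
          exact sum_le_sum hterm
      _ ≤ C * (n : ℝ) ^ γ * ((n : ℝ) ^ s * (∑' m : ℕ, (m : ℝ) ^ (-s) - 1)) := by
          gcongr
          exact sum_properDivisors_rpow_le hs hn.ne'
      _ = (n : ℝ) ^ (γ + s) * (C * (∑' m : ℕ, (m : ℝ) ^ (-s) - 1)) := by
          rw [Real.rpow_add hn0]
          ring
      _ ≤ (n : ℝ) ^ (γ + s) := mul_le_of_le_one_right (by positivity) hCs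

theorem stmt12 (f g : ℕ → ℝ) (hf1 : f 1 = 1)
    (hginv : ∀ n : ℕ, 0 < n →
      ∑ d ∈ n.divisors, f (n / d) * g d = if n = 1 then 1 else 0)
    (C : ℝ) (hC : 0 < C) (γ : ℝ)
    (hf : ∀ n : ℕ, 2 ≤ n → |f n| ≤ C * (n : ℝ) ^ γ)
    (ς : ℝ) (hς : 1 < ς) (hzeta : ∑' m : ℕ, (m : ℝ) ^ (-ς) = 1 / C + 1) :
    ∀ n : ℕ, 2 ≤ n → |g n| ≤ (n : ℝ) ^ (γ + ς) := by
  have hsummable : Summable fun m : ℕ => (m : ℝ) ^ (-ς) := Real.summable_nat_rpow.mpr (by linarith)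
  have hCzeta : C * (∑' m : ℕ, (m : ℝ) ^ (-ς) - 1) ≤ 1 := by
    rw [hzeta, add_sub_cancel_right, mul_one_div_cancel hC.ne']
  exact fun n hn =>
    abs_le_rpow_of_sum_divisors_eq_ite hf1 hginv hC.le hf hsummable hCzeta n (by omega)
end

section
/- Let n ≥ 1 and k ≥ 1 be integers, and let d_1, …, d_k be integers with each d_i ≥ 2 and d_1⋯d_k = n. Then d_1 + ⋯ + d_k ≤ 2(k−1) + n/2^{k−1}. -/
/-!
For `a, b ≥ 2` we have `a + b ≤ 2 + a * b / 2`, i.e. `(a - 2) * (b - 2) ≥ 0`: merging two factors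
into their product, halved, never decreases the sum. Peeling the factors off one at a time, the
normalised product of the remaining ones stays `≥ 2`, which keeps the inequality applicable.
-/

open Finset

lemma add_le_two_add_mul_div_two {a b : ℝ} (ha : 2 ≤ a) (hb : 2 ≤ b) :
    a + b ≤ 2 + a * b / 2 := by
  nlinarith [mul_nonneg (sub_nonneg.2 ha) (sub_nonneg.2 hb)]

lemma Finset.two_pow_card_le_prod {ι : Type*} (s : Finset ι) {f : ι → ℝ}
    (hf : ∀ i ∈ s, 2 ≤ f i) : (2 : ℝ) ^ #s ≤ ∏ i ∈ s, f i := by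
  rw [← prod_const]
  exact prod_le_prod (fun _ _ => zero_le_two) hf

/-- The normalisation `+ 2` on the left makes the bound hold for the empty family as well. -/
lemma Finset.sum_add_two_le_of_two_le {ι : Type*} [DecidableEq ι] (s : Finset ι) {f : ι → ℝ}
    (hf : ∀ i ∈ s, 2 ≤ f i) :
    ∑ i ∈ s, f i + 2 ≤ 2 * #s + 2 * (∏ i ∈ s, f i) / 2 ^ #s := by
  induction s using Finset.induction_on with
  | empty => simp
  | insert a s ha ih =>
    have hfa : 2 ≤ f a := hf a (mem_insert_self a s)
    have hfs : ∀ i ∈ s, 2 ≤ f i := fun i hi => hf i (mem_insert_of_mem hi)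
    set b := 2 * (∏ i ∈ s, f i) / 2 ^ #s with hb_def
    have hb : 2 ≤ b := by
      rw [hb_def, le_div_iff₀ (by positivity)]
      linarith [s.two_pow_card_le_prod hfs]
    have hmerge : 2 * (f a * ∏ i ∈ s, f i) / 2 ^ (#s + 1) = f a * b / 2 := by
      rw [hb_def, pow_succ]
      field_simp
    rw [sum_insert ha, prod_insert ha, card_insert_of_notMem ha, hmerge]
    push_cast
    linarith [ih hfs, add_le_two_add_mul_div_two hfa hb]

theorem stmt14_general (n k : ℕ) (hk : 1 ≤ k) (d : Fin k → ℕ)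
    (hd : ∀ i, 2 ≤ d i) (hprod : ∏ i, d i = n) :
    ∑ i, (d i : ℝ) ≤ 2 * ((k : ℝ) - 1) + (n : ℝ) / 2 ^ (k - 1) := by
  obtain ⟨m, rfl⟩ := Nat.exists_eq_add_of_le' hk
  have key := (univ : Finset (Fin (m + 1))).sum_add_two_le_of_two_le
    (f := fun i => (d i : ℝ)) (fun i _ => by exact_mod_cast hd i)
  have hn : ∏ i, (d i : ℝ) = n := by exact_mod_cast hprod
  rw [hn, card_univ, Fintype.card_fin, pow_succ] at key
  have hhalf : 2 * (n : ℝ) / (2 ^ m * 2) = n / 2 ^ m := by field_simp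
  rw [hhalf] at key
  simp only [Nat.add_sub_cancel]
  push_cast at key ⊢
  linarith

theorem stmt14 (n k : ℕ) (hn : 1 ≤ n) (hk : 1 ≤ k) (d : Fin k → ℕ)
    (hd : ∀ i, 2 ≤ d i) (hprod : ∏ i, d i = n) :
    ∑ i, (d i : ℝ) ≤ 2 * ((k : ℝ) - 1) + (n : ℝ) / 2 ^ (k - 1) :=
  stmt14_general n k hk d hd hprod
end

section
/- Let f : ℕ → ℝ be an arithmetic function with f(1) = 1. Assume there exist A > 0 and c ∈ (0,1) such that |f(n)| ≤ A c^n for all n ≥ 2, and let ς > 1 be the real number satisfying ζ(ς) = 1/A + 1, where ζ is the Riemann zeta function. Then for all n ≥ 2, the Dirichlet inverse satisfies |f⁻¹(n)| ≤ Ω(n) · A · n^{ς + e·ln c} / 2^ς ≤ A · n^{ς + e·ln c} · ln n / (2^ς · ln 2). -/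
/-!
Since `e · log m ≤ m` and `log c < 0`, the hypothesis `|f m| ≤ A c^m` gives `|f m| ≤ A m^β` with
`β = e · log c`. Peeling off the terms `d = n` and `d = 1` of `∑_{d ∣ n} f(n/d) g(d) = 0` gives
`|g n| ≤ |f n| + ∑_{1 < d < n, d ∣ n} |f(n/d)| |g d|`, and strong induction on `n` with the
hypothesis `|g d| ≤ Ω(d) A d^(ς+β) / 2^ς` closes up: every proper divisor has `Ω(d) ≤ Ω(n) - 1`,
and `∑_{1 < d < n, d ∣ n} d^ς = n^ς ∑ (n/d)^(-ς) ≤ n^ς (ζ(ς) - 1) = n^ς / A`.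
The second inequality is `2^Ω(n) ≤ n`.
-/

open Real Finset

lemma exp_one_mul_log_le_self {x : ℝ} (hx : 0 < x) : exp 1 * log x ≤ x := by
  have h := log_le_sub_one_of_pos (div_pos hx (exp_pos 1))
  rw [log_div hx.ne' (exp_pos 1).ne', log_exp, sub_le_sub_iff_right,
    le_div_iff₀ (exp_pos 1)] at h
  linarith

lemma pow_le_natCast_rpow_exp_one_mul_log {c : ℝ} (hc0 : 0 < c) (hc1 : c ≤ 1) {m : ℕ}
    (hm : m ≠ 0) : c ^ m ≤ (m : ℝ) ^ (exp 1 * log c) := by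
  have hm0 : (0 : ℝ) < m := by positivity
  rw [← rpow_natCast, rpow_def_of_pos hc0, rpow_def_of_pos hm0, exp_le_exp]
  have := mul_le_mul_of_nonpos_left (exp_one_mul_log_le_self hm0) (log_nonpos hc0.le hc1)
  linarith

lemma Nat.two_pow_length_primeFactorsList_le {n : ℕ} (hn : n ≠ 0) :
    2 ^ n.primeFactorsList.length ≤ n := by
  conv_rhs => rw [← Nat.prod_primeFactorsList hn]
  exact List.pow_card_le_prod _ _ fun p hp => (Nat.prime_of_mem_primeFactorsList hp).two_le

lemma Nat.length_primeFactorsList_le_log_div_log_two {n : ℕ} (hn : n ≠ 0) :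
    (n.primeFactorsList.length : ℝ) ≤ Real.log n / Real.log 2 := by
  rw [le_div_iff₀ (Real.log_pos one_lt_two), ← Real.log_pow]
  exact Real.log_le_log (by positivity)
    (by exact_mod_cast Nat.two_pow_length_primeFactorsList_le hn)

lemma Nat.two_le_div_of_dvd_of_lt {d n : ℕ} (hdn : d ∣ n) (hlt : d < n) : 2 ≤ n / d := by
  obtain ⟨k, rfl⟩ := hdn
  have hd : 0 < d := by by_contra! h; simp_all
  rw [Nat.mul_div_cancel_left k hd]
  by_contra! hk
  interval_cases k <;> simp_all

lemma Nat.length_primeFactorsList_add_one_le_of_dvd {d n : ℕ} (hdn : d ∣ n) (hlt : d < n) :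
    d.primeFactorsList.length + 1 ≤ n.primeFactorsList.length := by
  have hk := Nat.two_le_div_of_dvd_of_lt hdn hlt
  have hd : d ≠ 0 := by rintro rfl; simp at hk
  conv_rhs => rw [← Nat.mul_div_cancel' hdn]
  simp only [← ArithmeticFunction.cardFactors_apply]
  rw [ArithmeticFunction.cardFactors_mul hd (by omega)]
  exact Nat.add_le_add_left (ArithmeticFunction.cardFactors_pos_iff_one_lt.2 hk) _

lemma rpow_le_rpow_add_div_two_rpow {x ς : ℝ} (hx : 2 ≤ x) (hς : 0 ≤ ς) (β : ℝ) :
    x ^ β ≤ x ^ (ς + β) / 2 ^ ς := by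
  rw [rpow_add (by linarith), mul_div_right_comm]
  refine le_mul_of_one_le_left (by positivity) ((one_le_div (by positivity)).2 ?_)
  exact rpow_le_rpow zero_le_two hx hς

lemma sum_rpow_neg_le_tsum_sub_one_s15 {ς : ℝ} (hς : 1 < ς) {S : Finset ℕ} (hS : 1 ∉ S) :
    ∑ m ∈ S, (m : ℝ) ^ (-ς) ≤ ∑' m : ℕ, (m : ℝ) ^ (-ς) - 1 := by
  have h := (summable_nat_rpow.2 (by linarith : -ς < -1)).sum_le_tsum (insert 1 S)
    fun m _ => by positivity
  rw [sum_insert hS, Nat.cast_one, one_rpow] at h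
  linarith

lemma sum_properDivisors_erase_one_rpow_le {ς : ℝ} (hς : 1 < ς) {n : ℕ} (hn : n ≠ 0) :
    ∑ d ∈ n.properDivisors.erase 1, (d : ℝ) ^ ς ≤
      (n : ℝ) ^ ς * (∑' m : ℕ, (m : ℝ) ^ (-ς) - 1) := by
  set T := n.properDivisors.erase 1
  have hT : ∀ d ∈ T, d ∣ n ∧ d < n := fun d hd =>
    Nat.mem_properDivisors.1 (mem_of_mem_erase hd)
  have hcodiv : ∀ d ∈ T, (d : ℝ) ^ ς = (n : ℝ) ^ ς * ((n / d : ℕ) : ℝ) ^ (-ς) := by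
    intro d hd
    obtain ⟨hdvd, hlt⟩ := hT d hd
    have hd0 : d ≠ 0 := ne_zero_of_dvd_ne_zero hn hdvd
    have hnd := Nat.two_le_div_of_dvd_of_lt hdvd hlt
    rw [rpow_neg (by positivity), ← div_eq_mul_inv, eq_div_iff (by positivity),
      ← mul_rpow (by positivity) (by positivity), ← Nat.cast_mul, Nat.mul_div_cancel' hdvd]
  have hinj : Set.InjOn (n / ·) T := fun d hd d' hd' h => by
    rw [← Nat.div_div_self (hT d hd).1 hn, ← Nat.div_div_self (hT d' hd').1 hn]
    exact congrArg (n / ·) h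
  have hone : 1 ∉ T.image (n / ·) := by
    simp only [mem_image, not_exists, not_and]
    intro d hd h
    have := Nat.two_le_div_of_dvd_of_lt (hT d hd).1 (hT d hd).2
    omega
  rw [sum_congr rfl hcodiv, ← mul_sum, ← sum_image (f := fun m : ℕ => (m : ℝ) ^ (-ς)) hinj]
  exact mul_le_mul_of_nonneg_left (sum_rpow_neg_le_tsum_sub_one_s15 hς hone) (by positivity)

lemma abs_mul_abs_le_of_dvd {f g : ℕ → ℝ} {A β ς : ℝ} (hA : 0 ≤ A)
    (hf : ∀ n : ℕ, 2 ≤ n → |f n| ≤ A * (n : ℝ) ^ β) {d n : ℕ} (hdn : d ∣ n) (hlt : d < n)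
    (hgd : |g d| ≤ (d.primeFactorsList.length : ℝ) * A * (d : ℝ) ^ (ς + β) / 2 ^ ς) :
    |f (n / d)| * |g d| ≤
      ((n.primeFactorsList.length : ℝ) - 1) * A ^ 2 * n ^ β / 2 ^ ς * d ^ ς := by
  have hd0 : d ≠ 0 := by rintro rfl; simp at hdn; omega
  have hΩ : (d.primeFactorsList.length : ℝ) ≤ n.primeFactorsList.length - 1 := by
    rw [le_sub_iff_add_le]
    exact_mod_cast Nat.length_primeFactorsList_add_one_le_of_dvd hdn hlt
  have hcodiv : ((n / d : ℕ) : ℝ) ^ β * (d : ℝ) ^ β = n ^ β := by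
    rw [← mul_rpow (by positivity) (by positivity), ← Nat.cast_mul, Nat.div_mul_cancel hdn]
  calc |f (n / d)| * |g d|
      ≤ A * ((n / d : ℕ) : ℝ) ^ β *
          (((n.primeFactorsList.length : ℝ) - 1) * A * d ^ (ς + β) / 2 ^ ς) := by
        refine mul_le_mul (hf _ (Nat.two_le_div_of_dvd_of_lt hdn hlt)) (hgd.trans ?_)
          (abs_nonneg _) (by positivity)
        gcongr
    _ = ((n.primeFactorsList.length : ℝ) - 1) * A ^ 2 * n ^ β / 2 ^ ς * d ^ ς := by
        rw [rpow_add (by positivity), ← hcodiv]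
        ring

section DirichletInverse

variable {f g : ℕ → ℝ} (hf1 : f 1 = 1)
  (hginv : ∀ n : ℕ, 0 < n → ∑ d ∈ n.divisors, f (n / d) * g d = if n = 1 then 1 else 0)
include hf1 hginv

lemma abs_le_abs_add_sum_properDivisors {n : ℕ} (hn : 1 < n) :
    |g n| ≤ |f n| + ∑ d ∈ n.properDivisors.erase 1, |f (n / d)| * |g d| := by
  have hg1 : g 1 = 1 := by simpa [hf1] using hginv 1 one_pos
  have hsum := hginv n (by omega)
  rw [if_neg hn.ne', ← Nat.cons_self_properDivisors (by omega), sum_cons, Nat.div_self (by omega),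
    hf1, one_mul, ← add_sum_erase _ _ (Nat.one_mem_properDivisors_iff_one_lt.2 hn), Nat.div_one,
    hg1, mul_one] at hsum
  rw [show g n = -(f n + ∑ d ∈ n.properDivisors.erase 1, f (n / d) * g d) by linarith, abs_neg]
  refine (abs_add_le _ _).trans (add_le_add_right ?_ _)
  exact (abs_sum_le_sum_abs _ _).trans_eq (sum_congr rfl fun d _ => abs_mul _ _)

theorem abs_le_length_primeFactorsList_mul_rpow {A β ς : ℝ} (hA : 0 < A) (hς : 1 < ς)
    (hf : ∀ n : ℕ, 2 ≤ n → |f n| ≤ A * (n : ℝ) ^ β)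
    (hzeta : ∑' m : ℕ, (m : ℝ) ^ (-ς) ≤ 1 / A + 1) (n : ℕ) (hn : 2 ≤ n) :
    |g n| ≤ (n.primeFactorsList.length : ℝ) * A * (n : ℝ) ^ (ς + β) / 2 ^ ς := by
  induction n using Nat.strong_induction_on with
  | _ n ih =>
  set Ω : ℝ := (n.primeFactorsList.length : ℝ)
  have hsplit : (n : ℝ) ^ (ς + β) = n ^ ς * n ^ β := rpow_add (by positivity) _ _
  have hΩ : 1 ≤ Ω := by
    have := ArithmeticFunction.cardFactors_pos_iff_one_lt.2 (by omega : 1 < n)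
    rw [ArithmeticFunction.cardFactors_apply] at this
    exact Nat.one_le_cast.2 this
  have hhead : |f n| ≤ A * n ^ (ς + β) / 2 ^ ς := by
    rw [mul_div_assoc]
    exact (hf n hn).trans (mul_le_mul_of_nonneg_left
      (rpow_le_rpow_add_div_two_rpow (by exact_mod_cast hn) (by linarith) β) hA.le)
  have hterm : ∀ d ∈ n.properDivisors.erase 1,
      |f (n / d)| * |g d| ≤ (Ω - 1) * A ^ 2 * n ^ β / 2 ^ ς * d ^ ς := by
    intro d hd
    obtain ⟨hdn, hlt⟩ := Nat.mem_properDivisors.1 (mem_of_mem_erase hd)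
    have hd2 : 2 ≤ d := by
      have := (Nat.pos_of_dvd_of_pos hdn (by omega))
      have := ne_of_mem_erase hd
      omega
    exact abs_mul_abs_le_of_dvd hA.le hf hdn hlt (ih d hlt hd2)
  have htail : ∑ d ∈ n.properDivisors.erase 1, (d : ℝ) ^ ς ≤ n ^ ς * (1 / A) :=
    (sum_properDivisors_erase_one_rpow_le hς (by omega)).trans
      (mul_le_mul_of_nonneg_left (by linarith) (by positivity))
  calc |g n| ≤ |f n| + ∑ d ∈ n.properDivisors.erase 1, |f (n / d)| * |g d| :=
        abs_le_abs_add_sum_properDivisors hf1 hginv (by omega)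
    _ ≤ A * n ^ (ς + β) / 2 ^ ς +
          (Ω - 1) * A ^ 2 * n ^ β / 2 ^ ς * ∑ d ∈ n.properDivisors.erase 1, (d : ℝ) ^ ς := by
        rw [mul_sum]
        exact add_le_add hhead (sum_le_sum hterm)
    _ ≤ A * n ^ (ς + β) / 2 ^ ς + (Ω - 1) * A ^ 2 * n ^ β / 2 ^ ς * (n ^ ς * (1 / A)) := by
        gcongr
    _ = Ω * A * n ^ (ς + β) / 2 ^ ς := by
        rw [hsplit]
        field_simp
        ring

end DirichletInverse

theorem stmt15 (f g : ℕ → ℝ) (hf1 : f 1 = 1)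
    (hginv : ∀ n : ℕ, 0 < n →
      ∑ d ∈ n.divisors, f (n / d) * g d = if n = 1 then 1 else 0)
    (A c : ℝ) (hA : 0 < A) (hc0 : 0 < c) (hc1 : c < 1)
    (hf : ∀ n : ℕ, 2 ≤ n → |f n| ≤ A * c ^ n)
    (ς : ℝ) (hς : 1 < ς) (hzeta : ∑' m : ℕ, (m : ℝ) ^ (-ς) = 1 / A + 1) :
    ∀ n : ℕ, 2 ≤ n →
      |g n| ≤ (n.primeFactorsList.length : ℝ) * A *
          (n : ℝ) ^ (ς + Real.exp 1 * Real.log c) / (2 : ℝ) ^ ς ∧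
      (n.primeFactorsList.length : ℝ) * A *
          (n : ℝ) ^ (ς + Real.exp 1 * Real.log c) / (2 : ℝ) ^ ς ≤
        A * (n : ℝ) ^ (ς + Real.exp 1 * Real.log c) * Real.log n /
          ((2 : ℝ) ^ ς * Real.log 2) := by
  intro n hn
  have hf' (m : ℕ) (hm : 2 ≤ m) : |f m| ≤ A * (m : ℝ) ^ (exp 1 * log c) :=
    (hf m hm).trans <| mul_le_mul_of_nonneg_left
      (pow_le_natCast_rpow_exp_one_mul_log hc0 hc1.le (by omega)) hA.le
  refine ⟨abs_le_length_primeFactorsList_mul_rpow hf1 hginv hA hς hf' hzeta.le n hn, ?_⟩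
  set B := A * (n : ℝ) ^ (ς + exp 1 * log c) / 2 ^ ς
  calc (n.primeFactorsList.length : ℝ) * A * (n : ℝ) ^ (ς + exp 1 * log c) / 2 ^ ς
      = B * n.primeFactorsList.length := by ring
    _ ≤ B * (Real.log n / Real.log 2) := by
      gcongr
      exact Nat.length_primeFactorsList_le_log_div_log_two (by omega)
    _ = A * (n : ℝ) ^ (ς + exp 1 * log c) * Real.log n / (2 ^ ς * Real.log 2) := by ring
end

section
/- Let f : ℕ → ℝ be an arithmetic function with f(1) = 1 such that f(n) = 0 for all even n. Assume there exist C > 0 and γ ∈ ℝ such that |f(n)| ≤ C n^γ for all n ≥ 2, and let ς > 1 be the real number satisfying (1 − 2^{-ς}) ζ(ς) = 1/C + 1, where ζ is the Riemann zeta function. Then for all n ≥ 2, the Dirichlet inverse satisfies |f⁻¹(n)| ≤ n^{γ+ς}. -/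
/-!
Write `β = γ + ς`. Solving the convolution identity for the top term gives
`f⁻¹(n) = -∑_{d ∣ n, d < n} f(n/d) f⁻¹(d)`, so by strong induction
`|f⁻¹(n)| ≤ n^β ∑_{1 < m ∣ n} |f(m)| m^{-β}`, and it suffices that this divisor sum is at most `1`.
Only odd `m ≥ 3` contribute, each at most `C m^{-ς}`, and
`∑_{m ≥ 3 odd} m^{-ς} = (1 - 2^{-ς}) ζ(ς) - 1 = 1/C`.
-/

open Finset

theorem Nat.sum_divisors_erase_self_div {M : Type*} [AddCommGroup M] (h : ℕ → M) {n : ℕ}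
    (hn : 0 < n) : ∑ d ∈ n.divisors.erase n, h (n / d) = ∑ m ∈ n.divisors.erase 1, h m := by
  rw [sum_erase_eq_sub (Nat.mem_divisors_self n hn.ne'),
    sum_erase_eq_sub (Nat.one_mem_divisors.2 hn.ne'), Nat.sum_div_divisors, Nat.div_self hn]

theorem abs_le_rpow_of_sum_divisors_mul_eq_ite (f g : ℕ → ℝ) (hf1 : f 1 = 1)
    (hginv : ∀ n : ℕ, 0 < n →
      ∑ d ∈ n.divisors, f (n / d) * g d = if n = 1 then 1 else 0)
    (β : ℝ) (hβ : ∀ n : ℕ, ∑ m ∈ n.divisors.erase 1, |f m| * (m : ℝ) ^ (-β) ≤ 1) :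
    ∀ n : ℕ, 0 < n → |g n| ≤ (n : ℝ) ^ β := by
  intro n
  induction n using Nat.strong_induction_on with
  | _ n ih =>
  intro hn
  have hrec := hginv n hn
  rw [← add_sum_erase _ _ (Nat.mem_divisors_self n hn.ne'), Nat.div_self hn, hf1, one_mul] at hrec
  obtain rfl | hn1 := eq_or_ne n 1
  · simp_all
  rw [if_neg hn1, add_eq_zero_iff_eq_neg] at hrec
  have hterm : ∀ d ∈ n.divisors.erase n,
      |f (n / d) * g d| ≤ (n : ℝ) ^ β * (|f (n / d)| * ((n / d : ℕ) : ℝ) ^ (-β)) := by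
    intro d hd
    obtain ⟨hdn, hd⟩ := mem_erase.1 hd
    have hd0 := Nat.pos_of_mem_divisors hd
    have hscale : (n : ℝ) ^ β * ((n / d : ℕ) : ℝ) ^ (-β) = (d : ℝ) ^ β := by
      rw [Nat.cast_div (Nat.dvd_of_mem_divisors hd) (by positivity), Real.rpow_neg (by positivity),
        Real.div_rpow (by positivity) (by positivity)]
      field_simp
    calc |f (n / d) * g d| = |f (n / d)| * |g d| := abs_mul _ _
      _ ≤ |f (n / d)| * (d : ℝ) ^ β := by
        gcongr
        exact ih d (lt_of_le_of_ne (Nat.divisor_le hd) hdn) hd0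
      _ = (n : ℝ) ^ β * (|f (n / d)| * ((n / d : ℕ) : ℝ) ^ (-β)) := by
        rw [← hscale]; ring
  calc |g n| = |∑ d ∈ n.divisors.erase n, f (n / d) * g d| := by rw [hrec, abs_neg]
    _ ≤ ∑ d ∈ n.divisors.erase n, |f (n / d) * g d| := abs_sum_le_sum_abs _ _
    _ ≤ ∑ d ∈ n.divisors.erase n, (n : ℝ) ^ β * (|f (n / d)| * ((n / d : ℕ) : ℝ) ^ (-β)) :=
      sum_le_sum hterm
    _ = (n : ℝ) ^ β * ∑ m ∈ n.divisors.erase 1, |f m| * (m : ℝ) ^ (-β) := by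
      rw [← mul_sum, Nat.sum_divisors_erase_self_div (fun m => |f m| * (m : ℝ) ^ (-β)) hn]
    _ ≤ (n : ℝ) ^ β * 1 := by gcongr; exact hβ n
    _ = (n : ℝ) ^ β := mul_one _

section OddRpow

variable {s : ℝ}

theorem summable_indicator_odd_rpow_neg (hs : 1 < s) :
    Summable ({m : ℕ | Odd m}.indicator fun m : ℕ => (m : ℝ) ^ (-s)) :=
  (Real.summable_nat_rpow.2 (by linarith)).of_nonneg_of_le
    (Set.indicator_nonneg fun m _ => by positivity) (Set.indicator_le_self' fun m _ => by positivity)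

theorem tsum_indicator_odd_rpow_neg (hs : 1 < s) :
    ∑' m : ℕ, {m : ℕ | Odd m}.indicator (fun m : ℕ => (m : ℝ) ^ (-s)) m
      = (1 - (2 : ℝ) ^ (-s)) * ∑' m : ℕ, (m : ℝ) ^ (-s) := by
  have hsum : Summable fun m : ℕ => (m : ℝ) ^ (-s) := Real.summable_nat_rpow.2 (by linarith)
  have heven : Summable fun k : ℕ => ((2 * k : ℕ) : ℝ) ^ (-s) :=
    hsum.comp_injective fun a b (h : 2 * a = 2 * b) => by omega
  have hodd : Summable fun k : ℕ => ((2 * k + 1 : ℕ) : ℝ) ^ (-s) :=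
    hsum.comp_injective fun a b (h : 2 * a + 1 = 2 * b + 1) => by omega
  have hsplit := tsum_even_add_odd (f := fun m : ℕ => (m : ℝ) ^ (-s)) heven hodd
  have h2k : ∀ k : ℕ, ((2 * k : ℕ) : ℝ) ^ (-s) = (2 : ℝ) ^ (-s) * (k : ℝ) ^ (-s) := fun k => by
    push_cast; exact Real.mul_rpow (by norm_num) k.cast_nonneg
  simp_rw [h2k, tsum_mul_left] at hsplit
  have hind_even : ∀ k : ℕ, {m : ℕ | Odd m}.indicator (fun m : ℕ => (m : ℝ) ^ (-s)) (2 * k) = 0 :=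
    fun k => Set.indicator_of_notMem (by simp) _
  have hind_odd : ∀ k : ℕ, {m : ℕ | Odd m}.indicator (fun m : ℕ => (m : ℝ) ^ (-s)) (2 * k + 1)
      = ((2 * k + 1 : ℕ) : ℝ) ^ (-s) :=
    fun k => Set.indicator_of_mem (by simp) _
  rw [← tsum_even_add_odd (by simp only [hind_even]; exact summable_zero)
    (by simpa only [hind_odd] using hodd)]
  simp only [hind_even, hind_odd, tsum_zero, zero_add]
  linarith

theorem sum_indicator_odd_rpow_neg_le (hs : 1 < s) {t : Finset ℕ} (ht : 1 ∉ t) :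
    ∑ m ∈ t, {m : ℕ | Odd m}.indicator (fun m : ℕ => (m : ℝ) ^ (-s)) m
      ≤ ∑' m : ℕ, {m : ℕ | Odd m}.indicator (fun m : ℕ => (m : ℝ) ^ (-s)) m - 1 := by
  have h := (summable_indicator_odd_rpow_neg hs).sum_le_tsum (insert 1 t)
    fun m _ => Set.indicator_nonneg (fun m _ => by positivity) m
  rw [sum_insert ht, Set.indicator_of_mem (show 1 ∈ {m : ℕ | Odd m} from odd_one), Nat.cast_one,
    Real.one_rpow] at h
  linarith

theorem abs_mul_rpow_neg_le_indicator_odd {f : ℕ → ℝ} {C γ : ℝ}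
    (hfeven : ∀ n : ℕ, Even n → f n = 0) (hf : ∀ n : ℕ, 2 ≤ n → |f n| ≤ C * (n : ℝ) ^ γ)
    {m : ℕ} (hm : 2 ≤ m) :
    |f m| * (m : ℝ) ^ (-(γ + s))
      ≤ C * {m : ℕ | Odd m}.indicator (fun m : ℕ => (m : ℝ) ^ (-s)) m := by
  rcases Nat.even_or_odd m with he | ho
  · rw [hfeven m he, Set.indicator_of_notMem (by simpa using he), abs_zero, zero_mul, mul_zero]
  · rw [Set.indicator_of_mem (show m ∈ {m : ℕ | Odd m} from ho)]
    have hm0 : (0 : ℝ) < m := by positivity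
    calc |f m| * (m : ℝ) ^ (-(γ + s)) ≤ C * (m : ℝ) ^ γ * (m : ℝ) ^ (-(γ + s)) := by
          gcongr; exact hf m hm
      _ = C * (m : ℝ) ^ (-s) := by rw [mul_assoc, ← Real.rpow_add hm0]; ring_nf

end OddRpow

theorem stmt19 (f g : ℕ → ℝ) (hf1 : f 1 = 1)
    (hfeven : ∀ n : ℕ, Even n → f n = 0)
    (hginv : ∀ n : ℕ, 0 < n →
      ∑ d ∈ n.divisors, f (n / d) * g d = if n = 1 then 1 else 0)
    (C : ℝ) (hC : 0 < C) (γ : ℝ)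
    (hf : ∀ n : ℕ, 2 ≤ n → |f n| ≤ C * (n : ℝ) ^ γ)
    (ς : ℝ) (hς : 1 < ς)
    (hzeta : (1 - (2 : ℝ) ^ (-ς)) * ∑' m : ℕ, (m : ℝ) ^ (-ς) = 1 / C + 1) :
    ∀ n : ℕ, 2 ≤ n → |g n| ≤ (n : ℝ) ^ (γ + ς) := by
  set oddTerm := {m : ℕ | Odd m}.indicator fun m : ℕ => (m : ℝ) ^ (-ς)
  have hβ : ∀ n : ℕ, ∑ m ∈ n.divisors.erase 1, |f m| * (m : ℝ) ^ (-(γ + ς)) ≤ 1 := fun n =>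
    calc ∑ m ∈ n.divisors.erase 1, |f m| * (m : ℝ) ^ (-(γ + ς))
        ≤ ∑ m ∈ n.divisors.erase 1, C * oddTerm m :=
          sum_le_sum fun m hm => abs_mul_rpow_neg_le_indicator_odd hfeven hf <| by
            have := Nat.pos_of_mem_divisors (mem_of_mem_erase hm)
            have := ne_of_mem_erase hm
            omega
      _ = C * ∑ m ∈ n.divisors.erase 1, oddTerm m := (mul_sum _ _ _).symm
      _ ≤ C * (∑' m, oddTerm m - 1) := by
          gcongr; exact sum_indicator_odd_rpow_neg_le hς (notMem_erase 1 _)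
      _ = 1 := by rw [tsum_indicator_odd_rpow_neg hς, hzeta]; field_simp; ring
  exact fun n hn => abs_le_rpow_of_sum_divisors_mul_eq_ite f g hf1 hginv (γ + ς) hβ n (by omega)
end
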